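/- For every integer N ≥ 2, every ℏ > 0, every λ = (λ_1,…,λ_N) ∈ ℝ^N, and every x = (x_1,…,x_N) ∈ ℝ^N, the Givental integrand T ↦ exp{ (1/ℏ) 𝓕_N(T; λ, x) } is absolutely integrable over ℝ^{N(N−1)/2}; in particular the Givental integral Ψ^{(N)}_λ(x) is well defined. -/

import Mathlib

open MeasureTheory

noncomputable section

/-- The index set of the Givental variables `T_{k,i}`, `1 ≤ i ≤ k ≤ N−1`: the pair
`(p₁, p₂) : Fin N × Fin N` encodes `(k, i) = (p₁+1, p₂+1)`. It has `N(N−1)/2` elements. -/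
abbrev GIdx (N : ℕ) : Type :=
  {p : Fin N × Fin N // p.2.val ≤ p.1.val ∧ p.1.val + 1 ≤ N - 1}

/-- The value `T_{k,i}` (1-based indices) of a point `T : GIdx N → ℝ` of the Givental
integration domain, with the boundary convention `T_{N,i} := x_i`; the value is `0` for
out-of-range indices. -/
def gval (N : ℕ) (x : Fin N → ℝ) (T : GIdx N → ℝ) (k i : ℕ) : ℝ :=
  if h : 1 ≤ i ∧ i ≤ k ∧ k ≤ N - 1 then
    T ⟨(⟨k - 1, by omega⟩, ⟨i - 1, by omega⟩),
       ⟨by show i - 1 ≤ k - 1; omega, by show k - 1 + 1 ≤ N - 1; omega⟩⟩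
  else if h' : k = N ∧ 1 ≤ i ∧ i ≤ N then x ⟨i - 1, by omega⟩
  else 0

/-- The Givental potential
`𝓕_N(T; λ, x) = i Σ_{k=1}^{N} λ_k (Σ_{i=1}^{k} T_{k,i} − Σ_{i=1}^{k−1} T_{k−1,i})
 − Σ_{k=1}^{N−1} Σ_{i=1}^{k} (e^{T_{k+1,i} − T_{k,i}} + e^{T_{k,i} − T_{k+1,i+1}})`,
with `T_{N,i} := x_i`. -/
def Fpot (N : ℕ) (lam x : Fin N → ℝ) (T : GIdx N → ℝ) : ℂ :=
  Complex.I * ∑ a : Fin N, (lam a : ℂ) *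
      ((∑ i ∈ Finset.Icc 1 (a.val + 1), (gval N x T (a.val + 1) i : ℂ))
        - ∑ i ∈ Finset.Icc 1 a.val, (gval N x T a.val i : ℂ))
    - ∑ k ∈ Finset.Icc 1 (N - 1), ∑ i ∈ Finset.Icc 1 k,
        ((Real.exp (gval N x T (k + 1) i - gval N x T k i) : ℂ)
          + (Real.exp (gval N x T k i - gval N x T (k + 1) (i + 1)) : ℂ))

/-- The Givental integrand `T ↦ exp( 𝓕_N(T; λ, x) / ℏ )`. -/
def givIntegrand (N : ℕ) (hbar : ℝ) (lam x : Fin N → ℝ) (T : GIdx N → ℝ) : ℂ :=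
  Complex.exp (Fpot N lam x T / (hbar : ℂ))

/-- The Givental integral `Ψ^{(N)}_λ(x) = ∫ exp( 𝓕_N(T; λ, x) / ℏ ) dT` over
`ℝ^{N(N−1)/2}`. -/
def GivPsi (N : ℕ) (hbar : ℝ) (lam : Fin N → ℝ) (x : Fin N → ℝ) : ℂ :=
  ∫ T : GIdx N → ℝ, givIntegrand N hbar lam x T

/-!
The modulus of the integrand is `exp (-E(T) / ℏ)`, where `E` is the sum of the exponentials
in `𝓕_N`. Every variable `T_{k,i}` is joined to the boundary row `T_{N,·} = x` by the two
lattice paths `T_{k,i} → T_{k+1,i} → ⋯ → x_i` and `T_{k,i} → T_{k+1,i+1} → ⋯ → x_{i+N-k}`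
of at most `N` edges, and every edge difference along them is the exponent of a term of `E`.
Telescoping gives `e^{(x_i - T_{k,i})/N} + e^{(T_{k,i} - x_{i+N-k})/N} ≤ 2 max(1, E(T))`;
averaging over the variables, `exp (-E / ℏ)` is dominated by `e^{1/ℏ}` times a product of
one-variable functions `exp (-c (e^{(a-t)/N} + e^{(t-b)/N}))`, each bounded by a Gaussian.
-/

open Real Finset

theorem exp_sum_div_le_max_one {ι : Type*} {s : Finset ι} {d : ι → ℝ} {n : ℕ} {B : ℝ}
    (hs : s.Nonempty) (hn : #s ≤ n) (hd : ∀ j ∈ s, exp (d j) ≤ B) :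
    exp ((∑ j ∈ s, d j) / n) ≤ max 1 B := by
  rcases le_or_gt (∑ j ∈ s, d j) 0 with hneg | hpos
  · exact le_max_of_le_left <|
      exp_le_one_iff.mpr (div_nonpos_of_nonpos_of_nonneg hneg n.cast_nonneg)
  have hcard : (0 : ℝ) < #s := by exact_mod_cast hs.card_pos
  obtain ⟨j, hj, hdj⟩ : ∃ j ∈ s, (∑ j ∈ s, d j) / #s ≤ d j := by
    refine exists_le_of_sum_le hs ?_
    rw [sum_const, nsmul_eq_mul, mul_div_cancel₀ _ hcard.ne']
  calc exp ((∑ j ∈ s, d j) / n)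
      ≤ exp (d j) := exp_le_exp.mpr <|
        (div_le_div_of_nonneg_left hpos.le hcard (by exact_mod_cast hn)).trans hdj
    _ ≤ B := hd j hj
    _ ≤ max 1 B := le_max_right _ _

theorem exp_neg_mul_le_prod_exp {ι : Type*} [Fintype ι] [Nonempty ι] {c B : ℝ} {w : ι → ℝ}
    (hc : 0 ≤ c) (hw : ∀ i, w i ≤ B) :
    exp (-c * B) ≤ ∏ i, exp (-(c / Fintype.card ι) * w i) := by
  have hM : (0 : ℝ) < Fintype.card ι := by exact_mod_cast Fintype.card_pos
  have hsum : ∑ i, w i ≤ Fintype.card ι * B := by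
    simpa using sum_le_sum fun i (_ : i ∈ univ) => hw i
  rw [← exp_sum, exp_le_exp, ← mul_sum, neg_mul, neg_mul, neg_le_neg_iff, div_mul_eq_mul_div,
    div_le_iff₀ hM]
  nlinarith

def expWalls (a b s t : ℝ) : ℝ := exp ((a - t) / s) + exp ((t - b) / s)

theorem integrable_exp_neg_mul_expWalls {a b c s : ℝ} (hc : 0 < c) (hs : 0 < s) :
    Integrable fun t => exp (-c * expWalls a b s t) := by
  set m := min (exp (a / s)) (exp (-b / s))
  have hm : 0 < m := lt_min (exp_pos _) (exp_pos _)
  have hcont : Continuous fun t => exp (-c * expWalls a b s t) := by unfold expWalls; fun_prop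
  refine (integrable_exp_neg_mul_sq (b := c * m / (2 * s ^ 2)) (by positivity)).mono'
    hcont.aestronglyMeasurable (Filter.Eventually.of_forall fun t => ?_)
  rw [norm_of_nonneg (exp_nonneg _), exp_le_exp]
  have hwalls : m * exp (|t| / s) ≤ expWalls a b s t := by
    rcases le_total 0 t with ht | ht
    · calc m * exp (|t| / s) ≤ exp (-b / s) * exp (t / s) := by
            rw [abs_of_nonneg ht]; gcongr; exact min_le_right _ _
        _ = exp ((t - b) / s) := by rw [← exp_add]; ring_nf
        _ ≤ expWalls a b s t := le_add_of_nonneg_left (exp_nonneg _)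
    · calc m * exp (|t| / s) ≤ exp (a / s) * exp (-t / s) := by
            rw [abs_of_nonpos ht, neg_div]; gcongr; exact min_le_left _ _
        _ = exp ((a - t) / s) := by rw [← exp_add]; ring_nf
        _ ≤ expWalls a b s t := le_add_of_nonneg_right (exp_nonneg _)
  have hquad : (|t| / s) ^ 2 / 2 ≤ exp (|t| / s) := by
    have hy : 0 ≤ |t| / s := by positivity
    linarith [quadratic_le_exp_of_nonneg hy]
  have hgauss : c * m / (2 * s ^ 2) * t ^ 2 = c * (m * ((|t| / s) ^ 2 / 2)) := by
    rw [div_pow, sq_abs]; field_simp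
  have : c * (m * ((|t| / s) ^ 2 / 2)) ≤ c * expWalls a b s t := by gcongr; nlinarith
  linarith

namespace Givental

variable {N : ℕ} {x : Fin N → ℝ}

def edgeExp (N : ℕ) (x : Fin N → ℝ) (T : GIdx N → ℝ) (k i : ℕ) : ℝ :=
  exp (gval N x T (k + 1) i - gval N x T k i) + exp (gval N x T k i - gval N x T (k + 1) (i + 1))

def expSum (N : ℕ) (x : Fin N → ℝ) (T : GIdx N → ℝ) : ℝ :=
  ∑ k ∈ Icc 1 (N - 1), ∑ i ∈ Icc 1 k, edgeExp N x T k i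

lemma edgeExp_nonneg (T : GIdx N → ℝ) (k i : ℕ) : 0 ≤ edgeExp N x T k i := by
  unfold edgeExp; positivity

lemma expSum_nonneg (T : GIdx N → ℝ) : 0 ≤ expSum N x T :=
  sum_nonneg fun _ _ => sum_nonneg fun _ _ => edgeExp_nonneg T _ _

lemma edgeExp_le_expSum (T : GIdx N → ℝ) {k i : ℕ} (hi : 1 ≤ i) (hik : i ≤ k)
    (hk : k ≤ N - 1) : edgeExp N x T k i ≤ expSum N x T :=
  (single_le_sum (f := edgeExp N x T k) (fun _ _ => edgeExp_nonneg T _ _)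
    (mem_Icc.mpr ⟨hi, hik⟩)).trans <|
    single_le_sum (f := fun k => ∑ i ∈ Icc 1 k, edgeExp N x T k i)
      (fun _ _ => sum_nonneg fun _ _ => edgeExp_nonneg T _ _)
      (mem_Icc.mpr ⟨hi.trans hik, hk⟩)

lemma gval_coe (T : GIdx N → ℝ) (v : GIdx N) :
    gval N x T (v.1.1 + 1) (v.1.2 + 1) = T v := by
  have := v.2
  rw [gval, dif_pos ⟨by omega, by omega, by omega⟩]
  rfl

lemma gval_top (T : GIdx N → ℝ) (i : Fin N) : gval N x T N (i + 1) = x i := by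
  have := i.isLt
  rw [gval, dif_neg (by omega), dif_pos ⟨rfl, by omega, by omega⟩]
  rfl

@[fun_prop]
lemma continuous_gval (k i : ℕ) : Continuous fun T : GIdx N → ℝ => gval N x T k i := by
  unfold gval
  split_ifs <;> fun_prop

lemma continuous_givIntegrand (hbar : ℝ) (lam : Fin N → ℝ) :
    Continuous (givIntegrand N hbar lam x) := by
  unfold givIntegrand Fpot
  fun_prop

lemma re_Fpot (lam : Fin N → ℝ) (T : GIdx N → ℝ) : (Fpot N lam x T).re = -expSum N x T := by
  have hsplit : Fpot N lam x T = Complex.I * ((∑ a : Fin N, lam a *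
      ((∑ i ∈ Icc 1 (a.val + 1), gval N x T (a.val + 1) i)
        - ∑ i ∈ Icc 1 a.val, gval N x T a.val i) : ℝ) : ℂ) - (expSum N x T : ℂ) := by
    simp only [Fpot, expSum, edgeExp]
    push_cast
    ring
  simp [hsplit]

lemma norm_givIntegrand (hbar : ℝ) (lam : Fin N → ℝ) (T : GIdx N → ℝ) :
    ‖givIntegrand N hbar lam x T‖ = exp (-expSum N x T / hbar) := by
  rw [givIntegrand, Complex.norm_exp, Complex.div_ofReal_re, re_Fpot]

lemma exp_div_le_max_left (T : GIdx N → ℝ) {k i : ℕ} (hi : 1 ≤ i) (hik : i ≤ k)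
    (hk : k ≤ N - 1) :
    exp ((gval N x T N i - gval N x T k i) / N) ≤ max 1 (expSum N x T) := by
  have hpath := sum_range_sub (fun j => gval N x T (k + j) i) (N - k)
  rw [Nat.add_sub_cancel' (by omega), add_zero] at hpath
  rw [← hpath]
  refine exp_sum_div_le_max_one (nonempty_range_iff.mpr (by omega)) (by simp) fun j hj => ?_
  have := mem_range.mp hj
  exact (le_add_of_nonneg_right (exp_nonneg _)).trans
    (edgeExp_le_expSum T (k := k + j) hi (by omega) (by omega))

lemma exp_div_le_max_right (T : GIdx N → ℝ) {k i : ℕ} (hi : 1 ≤ i) (hik : i ≤ k)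
    (hk : k ≤ N - 1) :
    exp ((gval N x T k i - gval N x T N (i + (N - k))) / N) ≤ max 1 (expSum N x T) := by
  have hpath := sum_range_sub' (fun j => gval N x T (k + j) (i + j)) (N - k)
  rw [Nat.add_sub_cancel' (by omega), add_zero, add_zero] at hpath
  rw [← hpath]
  refine exp_sum_div_le_max_one (nonempty_range_iff.mpr (by omega)) (by simp) fun j hj => ?_
  have := mem_range.mp hj
  exact (le_add_of_nonneg_left (exp_nonneg _)).trans
    (edgeExp_le_expSum T (k := k + j) (i := i + j) (by omega) (by omega) (by omega))

/-- The boundary index `i + N - k - 1` (0-based) reached from `T_{k,i}` by the right path. -/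
def rightEnd (v : GIdx N) : Fin N := ⟨v.1.2 + (N - 1 - v.1.1), by have := v.2; omega⟩

lemma expWalls_le (T : GIdx N → ℝ) (v : GIdx N) :
    expWalls (x v.1.2) (x (rightEnd v)) N (T v) ≤ 2 * max 1 (expSum N x T) := by
  have := v.2
  have hleft := exp_div_le_max_left (x := x) T (k := v.1.1 + 1) (i := v.1.2 + 1)
    (by omega) (by omega) (by omega)
  have hright := exp_div_le_max_right (x := x) T (k := v.1.1 + 1) (i := v.1.2 + 1)
    (by omega) (by omega) (by omega)
  have hend : (v.1.2 : ℕ) + 1 + (N - (v.1.1 + 1)) = rightEnd v + 1 := by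
    simp only [rightEnd]; omega
  rw [gval_top, gval_coe] at hleft
  rw [hend, gval_top, gval_coe] at hright
  unfold expWalls
  linarith

end Givental

/-- the Givental integrand is absolutely integrable over `ℝ^{N(N−1)/2}`;
in particular the Givental integral `Ψ^{(N)}_λ(x)` is well defined. -/
theorem givental_integrand_integrable (N : ℕ) (hN : 2 ≤ N)
    (hbar : ℝ) (hhbar : 0 < hbar) (lam x : Fin N → ℝ) :
    Integrable (givIntegrand N hbar lam x) := by
  have hNpos : (0 : ℝ) < N := by positivity
  have : Nonempty (GIdx N) := ⟨⟨(⟨0, by omega⟩, ⟨0, by omega⟩), by simp; omega⟩⟩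
  set c := 1 / (2 * hbar) / Fintype.card (GIdx N)
  have hdom : Integrable fun T : GIdx N → ℝ =>
      exp (1 / hbar) * ∏ v, exp (-c * expWalls (x v.1.2) (x (Givental.rightEnd v)) N (T v)) :=
    (Integrable.fintype_prod fun v =>
      integrable_exp_neg_mul_expWalls (by positivity) hNpos).const_mul _
  refine hdom.mono' (Givental.continuous_givIntegrand hbar lam).aestronglyMeasurable
    (Filter.Eventually.of_forall fun T => ?_)
  set E := Givental.expSum N x T
  have hmax : max 1 E ≤ 1 + E := max_le_add_of_nonneg zero_le_one (Givental.expSum_nonneg T)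
  calc ‖givIntegrand N hbar lam x T‖ = exp (-E / hbar) := Givental.norm_givIntegrand hbar lam T
    _ ≤ exp (1 / hbar) * exp (-(1 / (2 * hbar)) * (2 * max 1 E)) := by
        rw [← exp_add, exp_le_exp]
        field_simp
        linarith
    _ ≤ _ := by
        gcongr
        exact exp_neg_mul_le_prod_exp (by positivity) (Givental.expWalls_le T)
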